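/- Under hypotheses H(A), H(J), H(γ,f) and (H_s), Problems P_incl and P_opt are equivalent and have a unique common solution: there exists exactly one u ∈ V with 0 ∈ ∂₂ℒ(u,u), there exists exactly one u ∈ V solving P_incl, and these solutions coincide. -/

import Mathlib

/-!
For fixed `w`, the functional `ℒ(w, ·)` is locally Lipschitz and, by H(A) and H(J), its Clarke
derivative is strongly monotone with constant `m_A - m_α ‖γ‖²`. A one-sided mean value
inequality turns this into strong convexity, so `ℒ(w, ·)` has a minimiser `Λ w`, a point where
its Clarke derivative is nonnegative in every direction. Comparing these inequalities for two
arguments shows that `Λ` is Lipschitz with constant `m_L ‖γ‖² / (m_A - m_α ‖γ‖²) < 1`, and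
Banach's fixed point theorem yields a solution of `P_opt`.

Since `F_A` is strictly differentiable with derivative `A`, the Clarke derivative of `ℒ(u, ·)`
at `u` is at most `⟨A u - f, d⟩ + J₂⁰(γ u, γ u; γ d)`; Hahn–Banach applied to the sublinear
functional `J₂⁰(γ u, γ u; ·)` then produces the multiplier `z` of `P_incl`. Finally `P_incl` has
at most one solution by the two monotonicity hypotheses and (H_s), which gives uniqueness for
both problems and their equivalence.
-/

open Filter Topology

/-- Clarke generalized directional derivative of `j` at `x` in direction `v`. -/
noncomputable def clarkeDeriv {Y : Type*} [NormedAddCommGroup Y] [NormedSpace ℝ Y]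
    (j : Y → ℝ) (x v : Y) : ℝ :=
  Filter.limsup (fun p : Y × ℝ => (j (p.1 + p.2 • v) - j p.1) / p.2)
    ((nhds x) ×ˢ (nhdsWithin (0 : ℝ) (Set.Ioi (0 : ℝ))))

/-- Clarke generalized subdifferential of `j` at `x`. -/
noncomputable def clarkeSubdiff {Y : Type*} [NormedAddCommGroup Y] [NormedSpace ℝ Y]
    (j : Y → ℝ) (x : Y) : Set (Y →L[ℝ] ℝ) :=
  {ξ : Y →L[ℝ] ℝ | ∀ v : Y, ξ v ≤ clarkeDeriv j x v}

open Set

lemma Filter.IsBoundedUnder.comp_tendsto {α β γ : Type*} {r : γ → γ → Prop} {F : Filter α}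
    {G : Filter β} {u : β → γ} {m : α → β} (h : IsBoundedUnder r G u) (hm : Tendsto m F G) :
    IsBoundedUnder r F (u ∘ m) := by
  rw [IsBoundedUnder, ← map_map]
  exact IsBounded.mono (map_mono hm) h

section ClarkeDerivative

variable {Y : Type*} [NormedAddCommGroup Y]

abbrev clarkeFilter (x : Y) : Filter (Y × ℝ) := 𝓝 x ×ˢ 𝓝[>] 0

lemma eventually_clarkeFilter_snd_pos (x : Y) : ∀ᶠ p in clarkeFilter x, 0 < p.2 :=
  (eventually_mem_nhdsWithin (a := (0 : ℝ)) (s := Ioi 0)).prod_inr _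

lemma tendsto_clarkeFilter_slice (x : Y) :
    Tendsto (fun t : ℝ => (x, t)) (𝓝[>] 0) (clarkeFilter x) :=
  tendsto_const_nhds.prodMk tendsto_id

variable [NormedSpace ℝ Y] {j : Y → ℝ}

noncomputable def diffQuot (j : Y → ℝ) (v : Y) (p : Y × ℝ) : ℝ := (j (p.1 + p.2 • v) - j p.1) / p.2

lemma clarkeDeriv_eq_limsup (j : Y → ℝ) (x v : Y) :
    clarkeDeriv j x v = limsup (diffQuot j v) (clarkeFilter x) := rfl

lemma tendsto_add_smul_clarkeFilter (x v : Y) :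
    Tendsto (fun p : Y × ℝ => p.1 + p.2 • v) (clarkeFilter x) (𝓝 x) := by
  have hfst : Tendsto (fun p : Y × ℝ => p.1) (clarkeFilter x) (𝓝 x) := tendsto_fst
  have hsnd : Tendsto (fun p : Y × ℝ => p.2) (clarkeFilter x) (𝓝 0) :=
    tendsto_snd.mono_right nhdsWithin_le_nhds
  simpa using hfst.add (hsnd.smul_const v)

lemma LocallyLipschitz.eventually_abs_diffQuot_le (hj : LocallyLipschitz j) (x : Y) :
    ∃ K : ℝ, 0 ≤ K ∧ ∀ v, ∀ᶠ p in clarkeFilter x, |diffQuot j v p| ≤ K * ‖v‖ := by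
  obtain ⟨K, t, ht, hK⟩ := hj x
  refine ⟨K, K.coe_nonneg, fun v => ?_⟩
  filter_upwards [tendsto_fst.eventually ht, (tendsto_add_smul_clarkeFilter x v).eventually ht,
    eventually_clarkeFilter_snd_pos x] with p hp hpv hpos
  rw [diffQuot, abs_div, abs_of_pos hpos, div_le_iff₀ hpos]
  calc |j (p.1 + p.2 • v) - j p.1| ≤ K * ‖p.1 + p.2 • v - p.1‖ := by
        simpa [Real.dist_eq, dist_eq_norm] using hK.dist_le_mul _ hpv _ hp
    _ = K * ‖v‖ * p.2 := by
        rw [add_sub_cancel_left, norm_smul, Real.norm_of_nonneg hpos.le]; ring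

lemma LocallyLipschitz.isBoundedUnder_le_diffQuot (hj : LocallyLipschitz j) (x v : Y) :
    IsBoundedUnder (· ≤ ·) (clarkeFilter x) (diffQuot j v) :=
  have ⟨_, _, hK⟩ := hj.eventually_abs_diffQuot_le x
  isBoundedUnder_of_eventually_le ((hK v).mono fun _ h => (abs_le.1 h).2)

lemma LocallyLipschitz.isBoundedUnder_ge_diffQuot (hj : LocallyLipschitz j) (x v : Y) :
    IsBoundedUnder (· ≥ ·) (clarkeFilter x) (diffQuot j v) :=
  have ⟨_, _, hK⟩ := hj.eventually_abs_diffQuot_le x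
  isBoundedUnder_of_eventually_ge ((hK v).mono fun _ h => (abs_le.1 h).1)

lemma LocallyLipschitz.abs_clarkeDeriv_le (hj : LocallyLipschitz j) (x : Y) :
    ∃ K : ℝ, 0 ≤ K ∧ ∀ v, |clarkeDeriv j x v| ≤ K * ‖v‖ := by
  obtain ⟨K, hK0, hK⟩ := hj.eventually_abs_diffQuot_le x
  refine ⟨K, hK0, fun v => abs_le.2 ⟨?_, ?_⟩⟩
  · exact le_limsup_of_frequently_le ((hK v).mono fun _ h => (abs_le.1 h).1).frequently
      (hj.isBoundedUnder_le_diffQuot x v)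
  · exact limsup_le_of_le (hj.isBoundedUnder_ge_diffQuot x v).isCoboundedUnder_le
      ((hK v).mono fun _ h => (abs_le.1 h).2)

@[simp]
lemma clarkeDeriv_zero (j : Y → ℝ) (x : Y) : clarkeDeriv j x 0 = 0 := by
  have : diffQuot j (0 : Y) = fun _ => 0 := by funext; simp [diffQuot]
  rw [clarkeDeriv_eq_limsup, this, limsup_const]

lemma LocallyLipschitz.clarkeDeriv_add_le (hj : LocallyLipschitz j) (x v w : Y) :
    clarkeDeriv j x (v + w) ≤ clarkeDeriv j x v + clarkeDeriv j x w := by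
  set m : Y × ℝ → Y × ℝ := fun p => (p.1 + p.2 • w, p.2)
  have hm : Tendsto m (clarkeFilter x) (clarkeFilter x) :=
    (tendsto_add_smul_clarkeFilter x w).prodMk tendsto_snd
  have hsplit : diffQuot j (v + w) = diffQuot j v ∘ m + diffQuot j w := by
    funext p
    have : p.1 + p.2 • (v + w) = p.1 + p.2 • w + p.2 • v := by rw [smul_add]; abel
    simp only [diffQuot, m, Function.comp_apply, Pi.add_apply, this]
    ring
  rw [clarkeDeriv_eq_limsup, hsplit]
  refine (limsup_add_le ((hj.isBoundedUnder_ge_diffQuot x v).comp_tendsto hm)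
    ((hj.isBoundedUnder_le_diffQuot x v).comp_tendsto hm)
    (hj.isBoundedUnder_ge_diffQuot x w).isCoboundedUnder_le
    (hj.isBoundedUnder_le_diffQuot x w)).trans (add_le_add ?_ le_rfl)
  exact hm.limsup_comp_le_limsup ((hj.isBoundedUnder_ge_diffQuot x v).mono hm).isCoboundedUnder_le
    (hj.isBoundedUnder_le_diffQuot x v)

lemma LocallyLipschitz.clarkeDeriv_add_clarkeDeriv_neg_nonneg (hj : LocallyLipschitz j) (x v : Y) :
    0 ≤ clarkeDeriv j x v + clarkeDeriv j x (-v) := by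
  simpa using hj.clarkeDeriv_add_le x v (-v)

lemma LocallyLipschitz.clarkeDeriv_smul_le (hj : LocallyLipschitz j) (x v : Y) {c : ℝ}
    (hc : 0 < c) : clarkeDeriv j x (c • v) ≤ c * clarkeDeriv j x v := by
  set m : Y × ℝ → Y × ℝ := fun p => (p.1, c * p.2)
  have hm : Tendsto m (clarkeFilter x) (clarkeFilter x) :=
    tendsto_fst.prodMk ((tendsto_def.2 fun _ hs => eventually_nhdsGT_zero_mul_left hc hs).comp
      tendsto_snd)
  have hscale : diffQuot j (c • v) = (c * ·) ∘ diffQuot j v ∘ m := by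
    funext p
    simp only [diffQuot, m, Function.comp_apply, smul_smul, mul_comm p.2 c]
    field_simp
  rw [clarkeDeriv_eq_limsup, hscale, ← Monotone.map_limsup_of_continuousAt
    (fun _ _ h => mul_le_mul_of_nonneg_left h hc.le) (diffQuot j v ∘ m)
    (continuous_const_mul c).continuousAt ((hj.isBoundedUnder_le_diffQuot x v).comp_tendsto hm)
    ((hj.isBoundedUnder_ge_diffQuot x v).comp_tendsto hm).isCoboundedUnder_le]
  exact mul_le_mul_of_nonneg_left (hm.limsup_comp_le_limsup
    ((hj.isBoundedUnder_ge_diffQuot x v).mono hm).isCoboundedUnder_le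
    (hj.isBoundedUnder_le_diffQuot x v)) hc.le

lemma LocallyLipschitz.clarkeDeriv_smul (hj : LocallyLipschitz j) (x v : Y) {c : ℝ}
    (hc : 0 < c) : clarkeDeriv j x (c • v) = c * clarkeDeriv j x v := by
  refine le_antisymm (hj.clarkeDeriv_smul_le x v hc) ?_
  have := hj.clarkeDeriv_smul_le x (c • v) (inv_pos.2 hc)
  rw [inv_smul_smul₀ hc.ne'] at this
  rwa [← le_inv_mul_iff₀ hc]

lemma LocallyLipschitz.eventually_diffQuot_lt (hj : LocallyLipschitz j) {x v : Y} {r : ℝ}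
    (h : clarkeDeriv j x v < r) : ∀ᶠ t in 𝓝[>] 0, diffQuot j v (x, t) < r :=
  (tendsto_clarkeFilter_slice x).eventually (eventually_lt_of_limsup_lt h
    (hj.isBoundedUnder_le_diffQuot x v))

lemma zero_mem_clarkeSubdiff_iff {x : Y} : 0 ∈ clarkeSubdiff j x ↔ ∀ v, 0 ≤ clarkeDeriv j x v :=
  Iff.rfl

lemma IsLocalMin.zero_mem_clarkeSubdiff (hj : LocallyLipschitz j) {x : Y} (hx : IsLocalMin j x) :
    0 ∈ clarkeSubdiff j x := by
  refine zero_mem_clarkeSubdiff_iff.2 fun v => ?_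
  have hmove : Tendsto (fun t : ℝ => x + t • v) (𝓝[>] 0) (𝓝 x) :=
    (tendsto_add_smul_clarkeFilter x v).comp (tendsto_clarkeFilter_slice x)
  have hdq : ∀ᶠ t in 𝓝[>] 0, 0 ≤ diffQuot j v (x, t) := by
    filter_upwards [hmove.eventually hx, eventually_mem_nhdsWithin] with t ht htpos
    exact div_nonneg (sub_nonneg.2 ht) (le_of_lt htpos)
  exact le_limsup_of_frequently_le ((tendsto_clarkeFilter_slice x).frequently hdq.frequently)
    (hj.isBoundedUnder_le_diffQuot x v)

lemma LocallyLipschitz.le_of_clarkeDeriv_le_affine (hj : LocallyLipschitz j) (a d : Y)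
    {β₀ β₁ : ℝ} (h : ∀ t ∈ Ico (0 : ℝ) 1, clarkeDeriv j (a + t • d) d ≤ β₀ + β₁ * t) :
    j (a + d) ≤ j a + β₀ + β₁ / 2 := by
  set g : ℝ → ℝ := fun t => j (a + t • d)
  have hg : Continuous g := hj.continuous.comp (by fun_prop)
  have hB : ∀ t, HasDerivAt (fun t : ℝ => j a + β₀ * t + β₁ / 2 * t ^ 2) (β₀ + β₁ * t) t := by
    intro t
    exact (((hasDerivAt_id' t).const_mul β₀).const_add (j a)).add
      ((hasDerivAt_pow 2 t).const_mul (β₁ / 2)) |>.congr_deriv (by norm_num; ring)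
  have hslope : ∀ t ∈ Ico (0 : ℝ) 1, ∀ r, β₀ + β₁ * t < r →
      ∃ᶠ z in 𝓝[>] t, slope g t z < r := by
    intro t ht r hr
    have hshift : Tendsto (fun z => z - t) (𝓝[>] t) (𝓝[>] 0) := by
      have h := map_add_right_nhdsGT (c := -t) (a := t)
      rw [add_neg_cancel] at h
      simp only [sub_eq_add_neg]
      exact h.le
    refine (hshift.eventually (hj.eventually_diffQuot_lt ((h t ht).trans_lt hr))).frequently.mono
      fun z hz => ?_
    have hpt : a + z • d = a + t • d + (z - t) • d := by rw [sub_smul]; abel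
    simpa [slope_def_field, g, diffQuot, hpt] using hz
  have hfence := image_le_of_liminf_slope_right_le_deriv_boundary hg.continuousOn (by simp [g])
    (fun t _ => (hB t).continuousAt.continuousWithinAt) (fun t _ => (hB t).hasDerivWithinAt)
    hslope (right_mem_Icc.2 zero_le_one)
  simpa [g] using hfence.trans_eq (by ring)

end ClarkeDerivative

section StrongMonotonicity

variable {Y : Type*} [NormedAddCommGroup Y] [NormedSpace ℝ Y] {j : Y → ℝ} {c : ℝ}

lemma LocallyLipschitz.add_clarkeDeriv_le_of_strongMono (hj : LocallyLipschitz j)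
    (hmono : ∀ u₁ u₂, clarkeDeriv j u₁ (u₂ - u₁) + clarkeDeriv j u₂ (u₁ - u₂)
      ≤ -(c * ‖u₁ - u₂‖ ^ 2)) (u d : Y) :
    j u + clarkeDeriv j u d + c / 2 * ‖d‖ ^ 2 ≤ j (u + d) := by
  -- mean value inequality on the segment from `u + d` back to `u`
  have hback : ∀ t ∈ Ico (0 : ℝ) 1, clarkeDeriv j (u + d + t • -d) (-d)
      ≤ (-clarkeDeriv j u d - c * ‖d‖ ^ 2) + c * ‖d‖ ^ 2 * t := by
    intro t ht
    have hs : 0 < 1 - t := by linarith [ht.2]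
    have h := hmono u (u + (1 - t) • d)
    rw [add_sub_cancel_left, show u - (u + (1 - t) • d) = (1 - t) • -d by module,
      hj.clarkeDeriv_smul _ _ hs, norm_smul, norm_neg, Real.norm_of_nonneg hs.le,
      show u + (1 - t) • d = u + d + t • -d by module, hj.clarkeDeriv_smul _ _ hs] at h
    refine le_of_mul_le_mul_left ?_ hs
    nlinarith [h]
  have hseg := hj.le_of_clarkeDeriv_le_affine (u + d) (-d) hback
  rw [add_neg_cancel_right] at hseg
  linarith

lemma exists_forall_le_of_midpoint_strongConvex [CompleteSpace Y] (hj : Continuous j)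
    (hbdd : BddBelow (range j)) (hc : 0 < c)
    (hmid : ∀ u₁ u₂, j (midpoint ℝ u₁ u₂) + c * ‖u₁ - u₂‖ ^ 2 ≤ (j u₁ + j u₂) / 2) :
    ∃ u, ∀ v, j u ≤ j v := by
  set I := ⨅ v, j v
  have hI : ∀ v, I ≤ j v := ciInf_le hbdd
  have happrox : ∀ n : ℕ, ∃ u, j u < I + 1 / (n + 1) := fun n =>
    exists_lt_of_ciInf_lt (lt_add_of_pos_right I Nat.one_div_pos_of_nat)
  choose U hU using happrox
  have hclose : ∀ m n N, N ≤ m → N ≤ n → dist (U m) (U n) ≤ √(1 / (N + 1) / c) := by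
    intro m n N hm hn
    have hmono : ∀ k, N ≤ k → (1 : ℝ) / (k + 1) ≤ 1 / (N + 1) := fun k hk =>
      Nat.one_div_le_one_div hk
    have hmid' := hmid (U m) (U n)
    have hI' := hI (midpoint ℝ (U m) (U n))
    refine Real.le_sqrt_of_sq_le ?_
    rw [dist_eq_norm, le_div_iff₀ hc]
    nlinarith [hU m, hU n, hmono m hm, hmono n hn]
  have hb : Tendsto (fun N : ℕ => √(1 / (N + 1) / c)) atTop (𝓝 0) := by
    simpa using ((tendsto_one_div_add_atTop_nhds_zero_nat.div_const c).sqrt)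
  obtain ⟨u, hu⟩ := cauchySeq_tendsto_of_complete (cauchySeq_of_le_tendsto_0 _ hclose hb)
  refine ⟨u, fun v => le_trans ?_ (hI v)⟩
  have hupper : Tendsto (fun n : ℕ => I + 1 / (n + 1)) atTop (𝓝 I) := by
    simpa using tendsto_one_div_add_atTop_nhds_zero_nat.const_add I
  exact le_of_tendsto_of_tendsto' ((hj.tendsto u).comp hu) hupper fun n => (hU n).le

lemma LocallyLipschitz.exists_forall_le_of_strongMono [CompleteSpace Y] (hj : LocallyLipschitz j)
    (hc : 0 < c) (hmono : ∀ u₁ u₂, clarkeDeriv j u₁ (u₂ - u₁) + clarkeDeriv j u₂ (u₁ - u₂)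
      ≤ -(c * ‖u₁ - u₂‖ ^ 2)) :
    ∃ u, ∀ v, j u ≤ j v := by
  have hsupp := hj.add_clarkeDeriv_le_of_strongMono hmono
  refine exists_forall_le_of_midpoint_strongConvex hj.continuous ?_ (by positivity : 0 < c / 8) ?_
  · obtain ⟨K, -, hK⟩ := hj.abs_clarkeDeriv_le 0
    refine ⟨j 0 - K ^ 2 / (2 * c), forall_mem_range.2 fun v => ?_⟩
    have hsq : c / 2 * ‖v‖ ^ 2 - K * ‖v‖ + K ^ 2 / (2 * c) = (c * ‖v‖ - K) ^ 2 / (2 * c) := by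
      field_simp; ring
    have hv := hsupp 0 v
    rw [zero_add] at hv
    have hpos : 0 ≤ (c * ‖v‖ - K) ^ 2 / (2 * c) := by positivity
    linarith [(abs_le.1 (hK v)).1]
  · intro u₁ u₂
    set m := midpoint ℝ u₁ u₂
    set w : Y := (1 / 2 : ℝ) • (u₂ - u₁)
    have h₂ : m + w = u₂ := by simp only [m, w, midpoint_eq_smul_add, invOf_eq_inv]; module
    have h₁ : m + -w = u₁ := by simp only [m, w, midpoint_eq_smul_add, invOf_eq_inv]; module
    have hw : ‖w‖ = ‖u₁ - u₂‖ / 2 := by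
      rw [norm_smul, norm_sub_rev]; norm_num; ring
    have hu₂ := hsupp m w
    have hu₁ := hsupp m (-w)
    rw [h₂, hw] at hu₂
    rw [h₁, norm_neg, hw] at hu₁
    linarith [hj.clarkeDeriv_add_clarkeDeriv_neg_nonneg m w]

end StrongMonotonicity

section StrictDerivative

variable {E Y : Type*} [NormedAddCommGroup E] [NormedSpace ℝ E]
  [NormedAddCommGroup Y] [NormedSpace ℝ Y]

lemma HasStrictFDerivAt.tendsto_diffQuot {g : Y → ℝ} {g' : Y →L[ℝ] ℝ} {x : Y}
    (hg : HasStrictFDerivAt g g' x) (v : Y) :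
    Tendsto (diffQuot g v) (clarkeFilter x) (𝓝 (g' v)) := by
  have hpair : Tendsto (fun p : Y × ℝ => (p.1 + p.2 • v, p.1)) (clarkeFilter x) (𝓝 (x, x)) :=
    (tendsto_add_smul_clarkeFilter x v).prodMk_nhds tendsto_fst
  have ho := (hasStrictFDerivAt_iff_isLittleO.1 hg).comp_tendsto hpair
  rw [Metric.tendsto_nhds]
  intro ε hε
  filter_upwards [ho.def (by positivity : 0 < ε / (‖v‖ + 1)), eventually_clarkeFilter_snd_pos x]
    with p hp hpos
  simp only [Function.comp_apply, add_sub_cancel_left, map_smul, smul_eq_mul, norm_smul,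
    Real.norm_eq_abs, _root_.abs_of_pos hpos] at hp
  have hdiff : diffQuot g v p - g' v = (g (p.1 + p.2 • v) - g p.1 - p.2 * g' v) / p.2 := by
    rw [diffQuot]; field_simp
  rw [Real.dist_eq, hdiff, abs_div, _root_.abs_of_pos hpos, div_lt_iff₀ hpos]
  calc _ ≤ ε / (‖v‖ + 1) * (p.2 * ‖v‖) := hp
    _ < ε * p.2 := by
      rw [div_mul_eq_mul_div, div_lt_iff₀ (by positivity)]
      nlinarith [mul_pos hε hpos]

lemma clarkeDeriv_add_le_of_hasStrictFDerivAt {g h : Y → ℝ} {g' : Y →L[ℝ] ℝ} {x : Y}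
    (hg : HasStrictFDerivAt g g' x) (hh : LocallyLipschitz h) (v : Y) :
    clarkeDeriv (fun y => g y + h y) x v ≤ g' v + clarkeDeriv h x v := by
  have hsplit : diffQuot (fun y => g y + h y) v = diffQuot g v + diffQuot h v := by
    funext p; simp only [diffQuot, Pi.add_apply]; ring
  have hlim := hg.tendsto_diffQuot v
  rw [clarkeDeriv_eq_limsup, hsplit, ← hlim.limsup_eq]
  exact limsup_add_le hlim.isBoundedUnder_ge hlim.isBoundedUnder_le
    (hh.isBoundedUnder_ge_diffQuot x v).isCoboundedUnder_le (hh.isBoundedUnder_le_diffQuot x v)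

lemma LocallyLipschitz.clarkeDeriv_comp_le {h : Y → ℝ} (hh : LocallyLipschitz h) (γ : E →L[ℝ] Y)
    (x v : E) : clarkeDeriv (h ∘ γ) x v ≤ clarkeDeriv h (γ x) (γ v) := by
  set m : E × ℝ → Y × ℝ := fun p => (γ p.1, p.2)
  have hm : Tendsto m (clarkeFilter x) (clarkeFilter (γ x)) :=
    ((γ.continuous.tendsto x).comp tendsto_fst).prodMk tendsto_snd
  have hcomp : diffQuot (h ∘ γ) v = diffQuot h (γ v) ∘ m := by
    funext p; simp [diffQuot, m]
  rw [clarkeDeriv_eq_limsup, hcomp]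
  exact hm.limsup_comp_le_limsup ((hh.isBoundedUnder_ge_diffQuot _ _).mono hm).isCoboundedUnder_le
    (hh.isBoundedUnder_le_diffQuot _ _)

lemma hasStrictFDerivAt_of_hasLineDerivAt {f : E → Y} {f' : E → E →L[ℝ] Y} {x : E}
    (hder : ∀ᶠ y in 𝓝 x, ∀ v, HasLineDerivAt ℝ f (f' y v) y v) (hcont : ContinuousAt f' x) :
    HasStrictFDerivAt f (f' x) x := by
  rw [hasStrictFDerivAt_iff_isLittleO, Asymptotics.isLittleO_iff]
  refine fun c hc => Metric.eventually_nhds_iff_ball.mpr ?_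
  obtain ⟨ε, ε0, hε⟩ := Metric.mem_nhds_iff.mp (inter_mem hder (hcont <| Metric.ball_mem_nhds _ hc))
  refine ⟨ε, ε0, ?_⟩
  rintro ⟨a, b⟩ h
  rw [← ball_prod_same, prodMk_mem_set_prod_eq] at h
  have hseg : ∀ s ∈ Icc (0 : ℝ) 1, b + s • (a - b) ∈ Metric.ball x ε := fun s hs =>
    (convex_ball x ε).add_smul_sub_mem h.2 h.1 hs
  have hderiv : ∀ s ∈ Icc (0 : ℝ) 1,
      HasDerivWithinAt (fun s => f (b + s • (a - b)) - s • f' x (a - b))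
        (f' (b + s • (a - b)) (a - b) - f' x (a - b)) (Icc 0 1) s := by
    intro s hs
    have hline : HasDerivAt (fun t => f (b + s • (a - b) + t • (a - b)))
        (f' (b + s • (a - b)) (a - b)) (s - s) := by
      rw [sub_self]; exact (hε (hseg s hs)).1 (a - b)
    have hshift := hline.comp_sub_const s s
    simp only [add_assoc, ← add_smul, add_sub_cancel] at hshift
    exact (hshift.sub ((hasDerivAt_id s).smul_const (f' x (a - b)))).hasDerivWithinAt.congr_deriv
      (by simp)
  have hbound : ∀ s ∈ Ico (0 : ℝ) 1,
      ‖f' (b + s • (a - b)) (a - b) - f' x (a - b)‖ ≤ c * ‖a - b‖ := by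
    intro s hs
    have hclose := (hε (hseg s (Ico_subset_Icc_self hs))).2
    rw [mem_preimage, Metric.mem_ball, dist_eq_norm] at hclose
    rw [← sub_apply]
    exact ((f' _ - f' x).le_opNorm _).trans (mul_le_mul_of_nonneg_right hclose.le (norm_nonneg _))
  have hmvt := norm_image_sub_le_of_norm_deriv_le_segment_01' hderiv hbound
  simp only [one_smul, zero_smul, add_sub_cancel, add_zero, sub_zero] at hmvt
  rwa [sub_right_comm] at hmvt

end StrictDerivative

lemma exists_le_sublinear_comp_eq {V X : Type*} [AddCommGroup V] [Module ℝ V]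
    [NormedAddCommGroup X] [NormedSpace ℝ X] (p : X → ℝ)
    (hp_smul : ∀ c : ℝ, 0 < c → ∀ x, p (c • x) = c * p x) (hp_add : ∀ x y, p (x + y) ≤ p x + p y)
    {K : ℝ} (hpK : ∀ x, p x ≤ K * ‖x‖) (γ : V →ₗ[ℝ] X) (ℓ : V →ₗ[ℝ] ℝ)
    (hℓ : ∀ v, ℓ v ≤ p (γ v)) :
    ∃ z : X →L[ℝ] ℝ, (∀ x, z x ≤ p x) ∧ ∀ v, z (γ v) = ℓ v := by
  have hp0 : p 0 = 0 := by
    have := hp_smul 2 two_pos 0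
    rw [smul_zero] at this
    linarith
  have hker : LinearMap.ker γ ≤ LinearMap.ker ℓ := by
    intro v hv
    rw [LinearMap.mem_ker] at hv ⊢
    have h₁ := hℓ v
    have h₂ := hℓ (-v)
    rw [hv, hp0] at h₁
    rw [map_neg, map_neg, hv, neg_zero, hp0] at h₂
    linarith
  set g : LinearMap.range γ →ₗ[ℝ] ℝ :=
    (LinearMap.ker γ).liftQ ℓ hker ∘ₗ γ.quotKerEquivRange.symm.toLinearMap
  have hg : ∀ v, g ⟨γ v, LinearMap.mem_range_self γ v⟩ = ℓ v := by
    intro v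
    simp [g, LinearMap.quotKerEquivRange_symm_apply_image]
  obtain ⟨z, hz_ext, hz_le⟩ := exists_extension_of_le_sublinear ⟨LinearMap.range γ, g⟩ p
    hp_smul hp_add (by rintro ⟨_, v, rfl⟩; exact (hg v).trans_le (hℓ v))
  refine ⟨z.mkContinuous K fun x => ?_, hz_le, fun v => (hz_ext ⟨γ v, _⟩).trans (hg v)⟩
  rw [Real.norm_eq_abs, abs_le]
  have hneg := (hz_le (-x)).trans (hpK (-x))
  rw [map_neg, norm_neg] at hneg
  constructor <;> linarith [(hz_le x).trans (hpK x)]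

lemma LocallyLipschitz.exists_mem_clarkeSubdiff_comp_eq {V Y : Type*} [AddCommGroup V]
    [Module ℝ V] [NormedAddCommGroup Y] [NormedSpace ℝ Y] {j : Y → ℝ} (hj : LocallyLipschitz j)
    (x : Y) (γ : V →ₗ[ℝ] Y) (ℓ : V →ₗ[ℝ] ℝ) (hℓ : ∀ v, ℓ v ≤ clarkeDeriv j x (γ v)) :
    ∃ z ∈ clarkeSubdiff j x, ∀ v, z (γ v) = ℓ v := by
  obtain ⟨K, -, hK⟩ := hj.abs_clarkeDeriv_le x
  obtain ⟨z, hz, hzγ⟩ := exists_le_sublinear_comp_eq (clarkeDeriv j x)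
    (fun _ hc y => hj.clarkeDeriv_smul x y hc) (hj.clarkeDeriv_add_le x)
    (fun y => (le_abs_self _).trans (hK y)) γ ℓ hℓ
  exact ⟨z, hz, hzγ⟩

section Energy

variable {V X : Type*} [NormedAddCommGroup V] [NormedSpace ℝ V]
  [NormedAddCommGroup X] [NormedSpace ℝ X]

/-- The functional `ℒ(w, ·)` of the paper, with `j = J (γ w)`. -/
def energy (F : V → ℝ) (f : V →L[ℝ] ℝ) (j : X → ℝ) (γ : V →L[ℝ] X) (v : V) : ℝ :=
  F v - f v + j (γ v)

def ClarkeRelaxedMonotone (J : X → X → ℝ) (m_α m_L : ℝ) : Prop :=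
  ∀ w₁ w₂ v₁ v₂ : X, clarkeDeriv (J w₁) v₁ (v₂ - v₁) + clarkeDeriv (J w₂) v₂ (v₁ - v₂)
    ≤ m_α * ‖v₁ - v₂‖ ^ 2 + m_L * ‖w₁ - w₂‖ * ‖v₁ - v₂‖

lemma locallyLipschitz_energy {F : V → ℝ} {A : V → V →L[ℝ] ℝ}
    (hF : ∀ u, HasStrictFDerivAt F (A u) u) {j : X → ℝ} (hj : LocallyLipschitz j)
    (f : V →L[ℝ] ℝ) (γ : V →L[ℝ] X) : LocallyLipschitz (energy F f j γ) :=
  LocallyLipschitz.add (fun u => ((hF u).sub f.hasStrictFDerivAt).exists_lipschitzOnWith)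
    (hj.comp γ.lipschitz.locallyLipschitz)

lemma clarkeDeriv_energy_le {F : V → ℝ} {a : V →L[ℝ] ℝ} {u : V} (hF : HasStrictFDerivAt F a u)
    {j : X → ℝ} (hj : LocallyLipschitz j) (f : V →L[ℝ] ℝ) (γ : V →L[ℝ] X) (d : V) :
    clarkeDeriv (energy F f j γ) u d ≤ a d - f d + clarkeDeriv j (γ u) (γ d) := by
  have h := clarkeDeriv_add_le_of_hasStrictFDerivAt (hF.sub f.hasStrictFDerivAt)
    (hj.comp γ.lipschitz.locallyLipschitz) d
  have hcomp := hj.clarkeDeriv_comp_le γ u d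
  exact h.trans (by simp only [sub_apply]; linarith)

lemma exists_inclusion_of_zero_mem_clarkeSubdiff_energy {F : V → ℝ} {A : V → V →L[ℝ] ℝ} {u : V}
    (hF : HasStrictFDerivAt F (A u) u) {j : X → ℝ} (hj : LocallyLipschitz j) {f : V →L[ℝ] ℝ}
    {γ : V →L[ℝ] X} (hu : 0 ∈ clarkeSubdiff (energy F f j γ) u) :
    ∃ z ∈ clarkeSubdiff j (γ u), ∀ v, A u v + z (γ v) = f v := by
  obtain ⟨z, hz, hzγ⟩ := hj.exists_mem_clarkeSubdiff_comp_eq (γ u) γ (f - A u).toLinearMap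
    fun v => by
      have := (zero_mem_clarkeSubdiff_iff.1 hu v).trans (clarkeDeriv_energy_le hF hj f γ v)
      simp only [ContinuousLinearMap.coe_coe, sub_apply]
      linarith
  refine ⟨z, hz, fun v => ?_⟩
  have := hzγ v
  simp only [ContinuousLinearMap.coe_coe, sub_apply] at this
  rw [this]
  ring

variable {F : V → ℝ} {A : V → V →L[ℝ] ℝ} {m_A : ℝ} {J : X → X → ℝ} {m_α m_L : ℝ}

lemma clarkeDeriv_energy_add_le (hF : ∀ u, HasStrictFDerivAt F (A u) u)
    (hA : ∀ u v, m_A * ‖u - v‖ ^ 2 ≤ (A u - A v) (u - v)) (hJ : ∀ w, LocallyLipschitz (J w))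
    (hm_α : 0 ≤ m_α) (hm_L : 0 ≤ m_L) (hJ_mono : ClarkeRelaxedMonotone J m_α m_L)
    (f : V →L[ℝ] ℝ) (γ : V →L[ℝ] X) (ω₁ ω₂ : X) (u₁ u₂ : V) :
    clarkeDeriv (energy F f (J ω₁) γ) u₁ (u₂ - u₁)
        + clarkeDeriv (energy F f (J ω₂) γ) u₂ (u₁ - u₂)
      ≤ -((m_A - m_α * ‖γ‖ ^ 2) * ‖u₁ - u₂‖ ^ 2) + m_L * ‖γ‖ * ‖ω₁ - ω₂‖ * ‖u₁ - u₂‖ := by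
  have h₁ := clarkeDeriv_energy_le (hF u₁) (hJ ω₁) f γ (u₂ - u₁)
  have h₂ := clarkeDeriv_energy_le (hF u₂) (hJ ω₂) f γ (u₁ - u₂)
  rw [map_sub γ] at h₁ h₂
  have hJ' := hJ_mono ω₁ ω₂ (γ u₁) (γ u₂)
  have hA' := hA u₁ u₂
  have hγ : ‖γ u₁ - γ u₂‖ ≤ ‖γ‖ * ‖u₁ - u₂‖ := by rw [← map_sub]; exact γ.le_opNorm _
  have hα : m_α * ‖γ u₁ - γ u₂‖ ^ 2 ≤ m_α * (‖γ‖ * ‖u₁ - u₂‖) ^ 2 := by gcongr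
  have hL : m_L * ‖ω₁ - ω₂‖ * ‖γ u₁ - γ u₂‖ ≤ m_L * ‖ω₁ - ω₂‖ * (‖γ‖ * ‖u₁ - u₂‖) := by gcongr
  simp only [sub_apply, map_sub] at hA' h₁ h₂
  nlinarith

lemma norm_sub_le_of_zero_mem_clarkeSubdiff_energy (hF : ∀ u, HasStrictFDerivAt F (A u) u)
    (hA : ∀ u v, m_A * ‖u - v‖ ^ 2 ≤ (A u - A v) (u - v)) (hJ : ∀ w, LocallyLipschitz (J w))
    (hm_α : 0 ≤ m_α) (hm_L : 0 ≤ m_L) (hJ_mono : ClarkeRelaxedMonotone J m_α m_L)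
    {f : V →L[ℝ] ℝ} {γ : V →L[ℝ] X} {ω₁ ω₂ : X} {u₁ u₂ : V}
    (h₁ : 0 ∈ clarkeSubdiff (energy F f (J ω₁) γ) u₁)
    (h₂ : 0 ∈ clarkeSubdiff (energy F f (J ω₂) γ) u₂) :
    (m_A - m_α * ‖γ‖ ^ 2) * ‖u₁ - u₂‖ ≤ m_L * ‖γ‖ * ‖ω₁ - ω₂‖ := by
  have h := clarkeDeriv_energy_add_le hF hA hJ hm_α hm_L hJ_mono f γ ω₁ ω₂ u₁ u₂
  have h' := add_nonneg (zero_mem_clarkeSubdiff_iff.1 h₁ (u₂ - u₁))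
    (zero_mem_clarkeSubdiff_iff.1 h₂ (u₁ - u₂))
  rcases (norm_nonneg (u₁ - u₂)).eq_or_lt with hD | hD
  · rw [← hD, mul_zero]; positivity
  · exact le_of_mul_le_mul_right (by nlinarith) hD

lemma exists_zero_mem_clarkeSubdiff_energy [CompleteSpace V]
    (hF : ∀ u, HasStrictFDerivAt F (A u) u)
    (hA : ∀ u v, m_A * ‖u - v‖ ^ 2 ≤ (A u - A v) (u - v)) (hJ : ∀ w, LocallyLipschitz (J w))
    (hm_α : 0 ≤ m_α) (hm_L : 0 ≤ m_L) (hJ_mono : ClarkeRelaxedMonotone J m_α m_L)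
    (f : V →L[ℝ] ℝ) {γ : V →L[ℝ] X} (hc : 0 < m_A - m_α * ‖γ‖ ^ 2) (ω : X) :
    ∃ u, 0 ∈ clarkeSubdiff (energy F f (J ω) γ) u := by
  have hφ := locallyLipschitz_energy hF (hJ ω) f γ
  obtain ⟨u, hu⟩ := hφ.exists_forall_le_of_strongMono hc fun u₁ u₂ => by
    simpa using clarkeDeriv_energy_add_le hF hA hJ hm_α hm_L hJ_mono f γ ω ω u₁ u₂
  exact ⟨u, IsLocalMin.zero_mem_clarkeSubdiff hφ (.of_forall hu)⟩

lemma exists_zero_mem_clarkeSubdiff_energy_self [CompleteSpace V]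
    (hF : ∀ u, HasStrictFDerivAt F (A u) u)
    (hA : ∀ u v, m_A * ‖u - v‖ ^ 2 ≤ (A u - A v) (u - v)) (hJ : ∀ w, LocallyLipschitz (J w))
    (hm_α : 0 ≤ m_α) (hm_L : 0 ≤ m_L) (hJ_mono : ClarkeRelaxedMonotone J m_α m_L)
    (f : V →L[ℝ] ℝ) {γ : V →L[ℝ] X} (hs : (m_α + m_L) * ‖γ‖ ^ 2 < m_A) :
    ∃ u, 0 ∈ clarkeSubdiff (energy F f (J (γ u)) γ) u := by
  have hc : 0 < m_A - m_α * ‖γ‖ ^ 2 := by nlinarith [mul_nonneg hm_L (sq_nonneg ‖γ‖)]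
  choose Λ hΛ using exists_zero_mem_clarkeSubdiff_energy hF hA hJ hm_α hm_L hJ_mono f hc
  have hk : m_L * ‖γ‖ ^ 2 / (m_A - m_α * ‖γ‖ ^ 2) < 1 := (div_lt_one hc).2 (by linarith)
  have hΛγ : ContractingWith (m_L * ‖γ‖ ^ 2 / (m_A - m_α * ‖γ‖ ^ 2)).toNNReal (Λ ∘ γ) := by
    refine ⟨Real.toNNReal_lt_one.2 hk, LipschitzWith.of_dist_le' fun w₁ w₂ => ?_⟩
    rw [dist_eq_norm, dist_eq_norm, div_mul_eq_mul_div, le_div_iff₀ hc]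
    have hΛ₁₂ := norm_sub_le_of_zero_mem_clarkeSubdiff_energy hF hA hJ hm_α hm_L hJ_mono
      (hΛ (γ w₁)) (hΛ (γ w₂))
    have hγ : ‖γ w₁ - γ w₂‖ ≤ ‖γ‖ * ‖w₁ - w₂‖ := by rw [← map_sub]; exact γ.le_opNorm _
    have := mul_le_mul_of_nonneg_left hγ (mul_nonneg hm_L (norm_nonneg γ))
    simp only [Function.comp_apply]
    nlinarith
  have hfix : Λ (γ (ContractingWith.fixedPoint _ hΛγ)) = ContractingWith.fixedPoint _ hΛγ :=
    hΛγ.fixedPoint_isFixedPt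
  exact ⟨_, hfix ▸ hΛ _⟩

lemma eq_of_inclusion (hA : ∀ u v, m_A * ‖u - v‖ ^ 2 ≤ (A u - A v) (u - v))
    (hm_α : 0 ≤ m_α) (hm_L : 0 ≤ m_L) (hJ_mono : ClarkeRelaxedMonotone J m_α m_L)
    {γ : V →L[ℝ] X} (hs : (m_α + m_L) * ‖γ‖ ^ 2 < m_A) {f : V →L[ℝ] ℝ} {u₁ u₂ : V}
    (h₁ : ∃ z ∈ clarkeSubdiff (J (γ u₁)) (γ u₁), ∀ v, A u₁ v + z (γ v) = f v)
    (h₂ : ∃ z ∈ clarkeSubdiff (J (γ u₂)) (γ u₂), ∀ v, A u₂ v + z (γ v) = f v) :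
    u₁ = u₂ := by
  obtain ⟨z₁, hz₁, he₁⟩ := h₁
  obtain ⟨z₂, hz₂, he₂⟩ := h₂
  have hγ : ‖γ u₁ - γ u₂‖ ≤ ‖γ‖ * ‖u₁ - u₂‖ := by rw [← map_sub]; exact γ.le_opNorm _
  have key : m_A * ‖u₁ - u₂‖ ^ 2 ≤ (m_α + m_L) * ‖γ‖ ^ 2 * ‖u₁ - u₂‖ ^ 2 :=
    calc m_A * ‖u₁ - u₂‖ ^ 2 ≤ (A u₁ - A u₂) (u₁ - u₂) := hA u₁ u₂
      _ = z₁ (γ u₂ - γ u₁) + z₂ (γ u₁ - γ u₂) := by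
        have := he₁ (u₁ - u₂)
        have := he₂ (u₁ - u₂)
        simp only [sub_apply, map_sub] at *
        linarith
      _ ≤ clarkeDeriv (J (γ u₁)) (γ u₁) (γ u₂ - γ u₁)
          + clarkeDeriv (J (γ u₂)) (γ u₂) (γ u₁ - γ u₂) := add_le_add (hz₁ _) (hz₂ _)
      _ ≤ (m_α + m_L) * ‖γ u₁ - γ u₂‖ ^ 2 := by nlinarith [hJ_mono (γ u₁) (γ u₂) (γ u₁) (γ u₂)]
      _ ≤ (m_α + m_L) * ‖γ‖ ^ 2 * ‖u₁ - u₂‖ ^ 2 := by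
        rw [mul_assoc, ← mul_pow]; gcongr
  have hD : ‖u₁ - u₂‖ ^ 2 = 0 := by nlinarith [sq_nonneg ‖u₁ - u₂‖]
  rwa [sq_eq_zero_iff, norm_eq_zero, sub_eq_zero] at hD

end Energy

theorem stmt9_general
    {V : Type*} [NormedAddCommGroup V] [NormedSpace ℝ V] [CompleteSpace V]
    {X : Type*} [NormedAddCommGroup X] [NormedSpace ℝ X]
    (A : V → V →L[ℝ] ℝ) (F_A : V → ℝ) (L_A : ℝ)
    (hA_lip : ∀ u v : V, ‖A u - A v‖ ≤ L_A * ‖u - v‖)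
    (hA_pot : ∀ u v : V, HasLineDerivAt ℝ F_A (A u v) u v)
    (m_A : ℝ)
    (hA_mono : ∀ u v : V, m_A * ‖u - v‖ ^ 2 ≤ (A u - A v) (u - v))
    (J : X → X → ℝ)
    (hJ_lip : ∀ w : X, LocallyLipschitz (J w))
    (m_α m_L : ℝ) (hm_α : 0 ≤ m_α) (hm_L : 0 ≤ m_L)
    (hJ_mono : ∀ w₁ w₂ v₁ v₂ : X,
      clarkeDeriv (J w₁) v₁ (v₂ - v₁) + clarkeDeriv (J w₂) v₂ (v₁ - v₂)
        ≤ m_α * ‖v₁ - v₂‖ ^ 2 + m_L * ‖w₁ - w₂‖ * ‖v₁ - v₂‖)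
    (γ : V →L[ℝ] X) (f : V →L[ℝ] ℝ)
    (hs : (m_α + m_L) * ‖γ‖ ^ 2 < m_A)
 :
    (∃! u : V, (0 : V →L[ℝ] ℝ) ∈ clarkeSubdiff (fun v : V => F_A v - f v + J (γ u) (γ v)) u) ∧
    (∃! u : V, ∃ z ∈ clarkeSubdiff (J (γ u)) (γ u), ∀ v : V, A u v + z (γ v) = f v) ∧
    (∀ u : V,
      ((0 : V →L[ℝ] ℝ) ∈ clarkeSubdiff (fun v : V => F_A v - f v + J (γ u) (γ v)) u ↔
        ∃ z ∈ clarkeSubdiff (J (γ u)) (γ u), ∀ v : V, A u v + z (γ v) = f v)) := by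
  have hA_cont : Continuous A :=
    (LipschitzWith.of_dist_le' (K := L_A) (by simpa only [dist_eq_norm] using hA_lip)).continuous
  have hF : ∀ u, HasStrictFDerivAt F_A (A u) u := fun u =>
    hasStrictFDerivAt_of_hasLineDerivAt (.of_forall hA_pot) hA_cont.continuousAt
  have incl_of_opt : ∀ u, 0 ∈ clarkeSubdiff (energy F_A f (J (γ u)) γ) u →
      ∃ z ∈ clarkeSubdiff (J (γ u)) (γ u), ∀ v, A u v + z (γ v) = f v := fun u hu =>
    exists_inclusion_of_zero_mem_clarkeSubdiff_energy (hF u) (hJ_lip _) hu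
  obtain ⟨u₀, hu₀⟩ :=
    exists_zero_mem_clarkeSubdiff_energy_self hF hA_mono hJ_lip hm_α hm_L hJ_mono f hs
  have hincl₀ := incl_of_opt u₀ hu₀
  have eq_u₀ : ∀ u, (∃ z ∈ clarkeSubdiff (J (γ u)) (γ u), ∀ v, A u v + z (γ v) = f v) → u = u₀ :=
    fun _ hu => eq_of_inclusion hA_mono hm_α hm_L hJ_mono hs hu hincl₀
  exact ⟨⟨u₀, hu₀, fun u hu => eq_u₀ u (incl_of_opt u hu)⟩, ⟨u₀, hincl₀, eq_u₀⟩,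
    fun u => ⟨incl_of_opt u, fun hu => eq_u₀ u hu ▸ hu₀⟩⟩

theorem stmt9
    {V : Type*} [NormedAddCommGroup V] [NormedSpace ℝ V] [CompleteSpace V]
    {X : Type*} [NormedAddCommGroup X] [NormedSpace ℝ X] [CompleteSpace X]
    (hV_refl : Function.Surjective (NormedSpace.inclusionInDoubleDual ℝ V))
    (A : V → V →L[ℝ] ℝ) (F_A : V → ℝ) (L_A : ℝ) (hL_A : 0 < L_A)
    (hA_lip : ∀ u v : V, ‖A u - A v‖ ≤ L_A * ‖u - v‖)
    (hA_pot : ∀ u v : V, HasLineDerivAt ℝ F_A (A u v) u v)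
    (m_A : ℝ) (hm_A : 0 < m_A)
    (hA_mono : ∀ u v : V, m_A * ‖u - v‖ ^ 2 ≤ (A u - A v) (u - v))
    (J : X → X → ℝ)
    (hJ_lip : ∀ w : X, LocallyLipschitz (J w))
    (c₀ c₁ c₂ : ℝ) (hc₀ : 0 ≤ c₀) (hc₁ : 0 ≤ c₁) (hc₂ : 0 ≤ c₂)
    (hJ_bdd : ∀ w v : X, ∀ ξ ∈ clarkeSubdiff (J w) v, ‖ξ‖ ≤ c₀ + c₁ * ‖v‖ + c₂ * ‖w‖)
    (m_α m_L : ℝ) (hm_α : 0 ≤ m_α) (hm_L : 0 ≤ m_L)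
    (hJ_mono : ∀ w₁ w₂ v₁ v₂ : X,
      clarkeDeriv (J w₁) v₁ (v₂ - v₁) + clarkeDeriv (J w₂) v₂ (v₁ - v₂)
        ≤ m_α * ‖v₁ - v₂‖ ^ 2 + m_L * ‖w₁ - w₂‖ * ‖v₁ - v₂‖)
    (γ : V →L[ℝ] X) (f : V →L[ℝ] ℝ)
    (hs : (m_α + m_L) * ‖γ‖ ^ 2 < m_A)
 :
    (∃! u : V, (0 : V →L[ℝ] ℝ) ∈ clarkeSubdiff (fun v : V => F_A v - f v + J (γ u) (γ v)) u) ∧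
    (∃! u : V, ∃ z ∈ clarkeSubdiff (J (γ u)) (γ u), ∀ v : V, A u v + z (γ v) = f v) ∧
    (∀ u : V,
      ((0 : V →L[ℝ] ℝ) ∈ clarkeSubdiff (fun v : V => F_A v - f v + J (γ u) (γ v)) u ↔
        ∃ z ∈ clarkeSubdiff (J (γ u)) (γ u), ∀ v : V, A u v + z (γ v) = f v)) :=
  stmt9_general A F_A L_A hA_lip hA_pot m_A hA_mono J hJ_lip m_α m_L hm_α hm_L hJ_mono γ f hs
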